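/- arXiv:0805.4035 — 4 statements merged into one kernel-verified Lean document; each statement's English description precedes it below -/
import Mathlib

section
/- Let P be a lattice polytope in ℝⁿ such that for every integer m ≥ 2, every lattice point of mP is the sum of a lattice point of (m−1)P and a lattice point of P. Then for every integer j ≥ 1, every extreme point u₀ of P lying in ℤⁿ, and every lattice point w of jP with w ≠ j·u₀, the set jP ∩ (w + u₀ − P) contains at least two (distinct) lattice points. -/
/-!
Normal generation lets one peel lattice summands off `w ∈ jP` one at a time. If every summand
peeled off were `u₀`, then `w` would equal `j • u₀`; so some lattice `b ∈ P` with `b ≠ u₀` and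
`w - b ∈ (j - 1)P` exists. Then `w` and `w + u₀ - b` are two distinct lattice points of
`jP ∩ (w + u₀ - P)`, the second lying in `(j - 1)P + P = jP` by convexity.
-/

open Pointwise

/-- A point of `ℝⁿ` is a lattice point if all its coordinates are integers. -/
def IsLatticePoint {n : ℕ} (x : Fin n → ℝ) : Prop := ∀ i, ∃ z : ℤ, x i = (z : ℝ)

lemma IsLatticePoint.add {n : ℕ} {x y : Fin n → ℝ} (hx : IsLatticePoint x)
    (hy : IsLatticePoint y) : IsLatticePoint (x + y) := fun i => by
  obtain ⟨a, ha⟩ := hx i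
  obtain ⟨b, hb⟩ := hy i
  exact ⟨a + b, by simp [ha, hb]⟩

lemma IsLatticePoint.sub {n : ℕ} {x y : Fin n → ℝ} (hx : IsLatticePoint x)
    (hy : IsLatticePoint y) : IsLatticePoint (x - y) := fun i => by
  obtain ⟨a, ha⟩ := hx i
  obtain ⟨b, hb⟩ := hy i
  exact ⟨a - b, by simp [ha, hb]⟩

lemma Convex.sub_one_smul_add_self {E : Type*} [AddCommGroup E] [Module ℝ E] {P : Set E}
    (hP : Convex ℝ P) {t : ℝ} (ht : 1 ≤ t) : (t - 1) • P + P = t • P := by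
  simpa using (hP.add_smul (sub_nonneg.mpr ht) zero_le_one).symm

def IsNormallyGenerated {n : ℕ} (P : Set (Fin n → ℝ)) : Prop :=
  ∀ m : ℕ, 2 ≤ m → ∀ x ∈ (m : ℝ) • P, IsLatticePoint x →
    ∃ a ∈ ((m : ℝ) - 1) • P, ∃ b ∈ P, IsLatticePoint a ∧ IsLatticePoint b ∧ x = a + b

lemma IsNormallyGenerated.exists_lattice_summand_ne {n : ℕ} {P : Set (Fin n → ℝ)}
    (hNG : IsNormallyGenerated P) (hP : Convex ℝ P) (u₀ : Fin n → ℝ) {j : ℕ} (hj : 1 ≤ j)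
    {w : Fin n → ℝ} (hw : w ∈ (j : ℝ) • P)
    (hlatw : IsLatticePoint w) (hne : w ≠ (j : ℝ) • u₀) :
    ∃ b ∈ P, IsLatticePoint b ∧ b ≠ u₀ ∧ w - b ∈ ((j : ℝ) - 1) • P := by
  induction j, hj using Nat.le_induction generalizing w with
  | base =>
    rw [Nat.cast_one, one_smul] at hw hne
    exact ⟨w, hw, hlatw, hne, by simpa using Set.smul_mem_smul_set (a := (0 : ℝ)) hw⟩
  | succ j hj ih =>
    obtain ⟨a, ha, b, hb, hlata, hlatb, rfl⟩ := hNG (j + 1) (by omega) w hw hlatw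
    rw [Nat.cast_add_one, add_sub_cancel_right] at ha ⊢
    by_cases hbu : b = u₀
    · subst hbu
      have hane : a ≠ (j : ℝ) • b := fun h => hne (by rw [h]; push_cast; rw [add_smul, one_smul])
      obtain ⟨b', hb', hlatb', hb'ne, hab'⟩ := ih ha hlata hane
      refine ⟨b', hb', hlatb', hb'ne, ?_⟩
      rw [← hP.sub_one_smul_add_self (Nat.one_le_cast.mpr hj),
        show a + b - b' = a - b' + b by abel]
      exact Set.add_mem_add hab' hb
    · exact ⟨b, hb, hlatb, hbu, by rwa [add_sub_cancel_right]⟩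

/-- If `P` is a lattice polytope such that for every `m ≥ 2` every lattice point of `mP`
is the sum of a lattice point of `(m-1)P` and a lattice point of `P` (normal generation),
then for every `j ≥ 1`, every lattice extreme point `u₀` of `P`, and every lattice point
`w` of `jP` with `w ≠ j·u₀`, the set `jP ∩ (w + u₀ - P)` contains at least two distinct
lattice points. -/
theorem normally_generated_two_lattice_points {n : ℕ} (S : Finset (Fin n → ℤ))
    (P : Set (Fin n → ℝ))
    (hP : P = convexHull ℝ ((fun f : Fin n → ℤ => fun i => (f i : ℝ)) '' (S : Set (Fin n → ℤ))))
    (hNG : ∀ m : ℕ, 2 ≤ m → ∀ x ∈ (m : ℝ) • P, IsLatticePoint x →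
      ∃ a ∈ ((m : ℝ) - 1) • P, ∃ b ∈ P, IsLatticePoint a ∧ IsLatticePoint b ∧ x = a + b) :
    ∀ j : ℕ, 1 ≤ j → ∀ u₀ ∈ Set.extremePoints ℝ P, IsLatticePoint u₀ →
      ∀ w ∈ (j : ℝ) • P, IsLatticePoint w → w ≠ (j : ℝ) • u₀ →
        ∃ x y : Fin n → ℝ, x ≠ y ∧ IsLatticePoint x ∧ IsLatticePoint y ∧
          x ∈ (j : ℝ) • P ∩ {q | ∃ p ∈ P, q = w + u₀ - p} ∧
          y ∈ (j : ℝ) • P ∩ {q | ∃ p ∈ P, q = w + u₀ - p} := by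
  intro j hj u₀ hu₀ hlatu w hw hlatw hne
  have hconv : Convex ℝ P := hP ▸ convex_convexHull ℝ _
  obtain ⟨b, hb, hlatb, hbne, hwb⟩ :=
    IsNormallyGenerated.exists_lattice_summand_ne hNG hconv u₀ hj hw hlatw hne
  have hy : w + u₀ - b ∈ (j : ℝ) • P := by
    rw [← hconv.sub_one_smul_add_self (Nat.one_le_cast.mpr hj),
      show w + u₀ - b = w - b + u₀ by abel]
    exact Set.add_mem_add hwb hu₀.1
  exact ⟨w, w + u₀ - b, fun h => hbne (add_left_cancel (eq_sub_iff_add_eq.mp h)), hlatw,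
    (hlatw.add hlatu).sub hlatb, ⟨hw, u₀, hu₀.1, by abel⟩, ⟨hy, b, hb, rfl⟩⟩
end

section
/- Let P ⊆ ℝ³ be the convex hull of the four points (0,0,0), (1,0,0), (0,1,0), (1,1,2). Then (1,1,1) ∈ 2P, and the set of points x ∈ ℤ³ such that x ∈ 2P and (1,1,1) − x ∈ P is exactly the singleton {(1,1,1)}. -/
/-!
The four vertices satisfy the inequalities `0 ≤ z`, `z ≤ 2x`, `z ≤ 2y`, `2x + 2y - z ≤ 2`, so
every point of `tP` satisfies them with right-hand side `2t`. For an integer point `x ∈ 2P` with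
`(1,1,1) - x ∈ P`, these force `x₂ ∈ {0, 1}`; `x₂ = 0` leaves no room for `x₀, x₁`, and `x₂ = 1`
pins `x₀ = x₁ = 1`. Conversely `(1,1,1)` is twice the centroid of the vertices.
-/

open Pointwise

/-- The polytope of Example 4.12: the convex hull of
`(0,0,0), (1,0,0), (0,1,0), (1,1,2)` in `ℝ³`. -/
noncomputable def Pex : Set (Fin 3 → ℝ) :=
  convexHull ℝ {![0,0,0], ![1,0,0], ![0,1,0], ![1,1,2]}

def PexBounds (t : ℝ) (q : Fin 3 → ℝ) : Prop :=
  0 ≤ q 2 ∧ q 2 ≤ 2 * q 0 ∧ q 2 ≤ 2 * q 1 ∧ 2 * q 0 + 2 * q 1 - q 2 ≤ 2 * t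

theorem convex_setOf_pexBounds (t : ℝ) : Convex ℝ {q | PexBounds t q} := by
  intro x ⟨hx0, hx1, hx2, hx3⟩ y ⟨hy0, hy1, hy2, hy3⟩ a b ha hb hab
  simp only [PexBounds, Set.mem_ofPred_eq, Pi.add_apply, Pi.smul_apply, smul_eq_mul]
  refine ⟨by positivity, by nlinarith, by nlinarith, by nlinarith⟩

theorem PexBounds.smul {t c : ℝ} {q : Fin 3 → ℝ} (h : PexBounds t q) (hc : 0 ≤ c) :
    PexBounds (c * t) (c • q) := by
  obtain ⟨h0, h1, h2, h3⟩ := h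
  simp only [PexBounds, Pi.smul_apply, smul_eq_mul]
  refine ⟨by positivity, by nlinarith, by nlinarith, by nlinarith⟩

theorem Pex_subset_pexBounds : Pex ⊆ {q | PexBounds 1 q} := by
  refine convexHull_min ?_ (convex_setOf_pexBounds 1)
  simp [Set.insert_subset_iff, PexBounds]

theorem smul_Pex_subset_pexBounds {c : ℝ} (hc : 0 ≤ c) : c • Pex ⊆ {q | PexBounds c q} := by
  rintro _ ⟨p, hp, rfl⟩
  simpa using (Pex_subset_pexBounds hp).smul hc

theorem eq_one_of_pexBounds {x : Fin 3 → ℤ} (hx : PexBounds 2 (fun i => (x i : ℝ)))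
    (hx' : PexBounds 1 (![1,1,1] - fun i => (x i : ℝ))) : x = ![1,1,1] := by
  obtain ⟨h0, h1, h2, -⟩ := hx
  obtain ⟨h0', h1', h2', h3'⟩ := hx'
  simp only [Pi.sub_apply, Matrix.cons_val] at h0 h1 h2 h0' h1' h2' h3'
  norm_cast at h0 h1 h2 h0' h1' h2' h3'
  ext i; fin_cases i <;> simp <;> omega

theorem zero_mem_Pex : (0 : Fin 3 → ℝ) ∈ Pex :=
  subset_convexHull ℝ _ (Or.inl (by simp [← Matrix.cons_zero_zero]))

theorem centroid_mem_Pex : (![1/2, 1/2, 1/2] : Fin 3 → ℝ) ∈ Pex := by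
  have hsum : ∑ i, (1/4 : ℝ) • (![![0,0,0], ![1,0,0], ![0,1,0], ![1,1,2]] : Fin 4 → Fin 3 → ℝ) i
      ∈ Pex :=
    (convex_convexHull ℝ _).sum_mem (fun _ _ => by norm_num) (by simp)
      (fun i _ => subset_convexHull ℝ _ (by fin_cases i <;> simp))
  convert hsum using 1
  ext i; fin_cases i <;> simp [Fin.sum_univ_four] <;> norm_num

theorem one_mem_two_smul_Pex : (![1,1,1] : Fin 3 → ℝ) ∈ (2 : ℝ) • Pex :=
  ⟨_, centroid_mem_Pex, by ext i; fin_cases i <;> simp⟩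

/-- Example 4.12: `(1,1,1) ∈ 2P` and `2P ∩ ((1,1,1) − P) ∩ ℤ³ = {(1,1,1)}`. -/
theorem example11_computation :
    (![1,1,1] : Fin 3 → ℝ) ∈ (2 : ℝ) • Pex ∧
    {x : Fin 3 → ℤ | (fun i => (x i : ℝ)) ∈ (2 : ℝ) • Pex ∧
        (![1,1,1] : Fin 3 → ℝ) - (fun i => (x i : ℝ)) ∈ Pex} =
      {![1,1,1]} := by
  refine ⟨one_mem_two_smul_Pex, Set.eq_singleton_iff_unique_mem.2 ⟨?_, ?_⟩⟩
  · have hcast : (fun i => (((![1,1,1] : Fin 3 → ℤ)) i : ℝ)) = ![1,1,1] := by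
      ext i; fin_cases i <;> simp
    rw [Set.mem_ofPred_eq, hcast, sub_self]
    exact ⟨one_mem_two_smul_Pex, zero_mem_Pex⟩
  · rintro x ⟨hx, hx'⟩
    exact eq_one_of_pexBounds (smul_Pex_subset_pexBounds zero_le_two hx)
      (by simpa using Pex_subset_pexBounds hx')
end

section
/- Let P ⊆ ℝ³ be the convex hull of the four points (0,0,0), (1,0,0), (0,1,0), (1,1,2). Then the set of points x ∈ ℤ³ such that x ∈ 3P and (1,1,1) − x ∈ P is exactly the singleton {(1,1,1)}. -/
/-!
In coordinates, `P` is cut out by `0 ≤ z`, `z ≤ 2x`, `z ≤ 2y` and `2x + 2y - z ≤ 2`, so membership of a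
lattice point `v` in `3P` and of `(1,1,1) - v` in `P` becomes a system of linear inequalities over `ℤ`.
The second condition gives `z ≤ 1` and `1 + z ≤ 2x + 2y`, with `2x, 2y ≤ 1 + z`. For `z = 0` this
forces `x = y = 0`, contradicting `1 ≤ 2x + 2y`; for `z = 1` it forces `x = y = 1`.
-/

open Pointwise

lemma convex_Pex_halfspaces : Convex ℝ {p : Fin 3 → ℝ |
    0 ≤ p 2 ∧ p 2 ≤ 2 * p 0 ∧ p 2 ≤ 2 * p 1 ∧ 2 * p 0 + 2 * p 1 - p 2 ≤ 2} := by
  intro p ⟨hp₁, hp₂, hp₃, hp₄⟩ q ⟨hq₁, hq₂, hq₃, hq₄⟩ a b ha hb hab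
  simp only [Set.mem_ofPred_eq, Pi.add_apply, Pi.smul_apply, smul_eq_mul]
  exact ⟨by positivity, by nlinarith, by nlinarith, by nlinarith⟩

lemma mem_Pex_iff (p : Fin 3 → ℝ) :
    p ∈ Pex ↔ 0 ≤ p 2 ∧ p 2 ≤ 2 * p 0 ∧ p 2 ≤ 2 * p 1 ∧ 2 * p 0 + 2 * p 1 - p 2 ≤ 2 := by
  refine ⟨fun hp => convexHull_min ?_ convex_Pex_halfspaces hp, fun ⟨h₁, h₂, h₃, h₄⟩ => ?_⟩
  · simp [Set.insert_subset_iff]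
  let v : Fin 4 → Fin 3 → ℝ := ![![0,0,0], ![1,0,0], ![0,1,0], ![1,1,2]]
  -- barycentric coordinates of `p` with respect to the vertices `v`
  let w : Fin 4 → ℝ := ![1 - p 0 - p 1 + p 2 / 2, p 0 - p 2 / 2, p 1 - p 2 / 2, p 2 / 2]
  have hp : ∑ i, w i • v i = p := by
    ext j; fin_cases j <;> simp [Fin.sum_univ_four, w, v]
  rw [← hp]
  refine (convex_convexHull ℝ _).sum_mem (fun i _ => ?_) ?_ (fun i _ => subset_convexHull ℝ _ ?_)
  · fin_cases i <;> simp [w] <;> linarith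
  · simp [Fin.sum_univ_four, w]; ring
  · fin_cases i <;> simp [v]

lemma mem_smul_Pex_iff {c : ℝ} (hc : 0 < c) (p : Fin 3 → ℝ) :
    p ∈ c • Pex ↔
      0 ≤ p 2 ∧ p 2 ≤ 2 * p 0 ∧ p 2 ≤ 2 * p 1 ∧ 2 * p 0 + 2 * p 1 - p 2 ≤ 2 * c := by
  rw [Set.mem_smul_set_iff_inv_smul_mem₀ hc.ne', mem_Pex_iff]
  simp only [Pi.smul_apply, smul_eq_mul]
  field_simp
  simp only [zero_mul]

/-- `3P ∩ ((1,1,1) − P) ∩ ℤ³ = {(1,1,1)}`. -/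
theorem final_example_computation :
    {x : Fin 3 → ℤ | (fun i => (x i : ℝ)) ∈ (3 : ℝ) • Pex ∧
        (![1,1,1] : Fin 3 → ℝ) - (fun i => (x i : ℝ)) ∈ Pex} =
      {![1,1,1]} := by
  ext x
  simp only [Set.mem_ofPred_eq, Set.mem_singleton_iff, mem_smul_Pex_iff three_pos, mem_Pex_iff,
    Pi.sub_apply, funext_iff, Fin.forall_fin_succ, Matrix.cons_val, Fin.succ_zero_eq_one,
    Fin.succ_one_eq_two, IsEmpty.forall_iff, and_true]
  norm_cast
  omega
end

section
/- Let P ⊆ ℝ³ be the convex hull of the four points (0,0,0), (1,0,0), (0,1,0), (1,1,2). Then every lattice point of 3P is the sum of a lattice point of 2P and a lattice point of P; that is, 3P ∩ ℤ³ = (2P ∩ ℤ³) + (P ∩ ℤ³). -/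
/-!
`P` is the simplex `z ≥ 0`, `z ≤ 2x`, `z ≤ 2y`, `2x + 2y - z ≤ 2`, so for `k > 0` the lattice
points of `kP` are the integer solutions of these inequalities with `2k` on the right of the last
one. Subtracting one of the nonzero vertices `(1,1,2)`, `e₁`, `e₂` of `P` lowers the last slack by
`2`, and is admissible when `z ≥ 2`, `2x ≥ z + 2`, `2y ≥ z + 2` respectively; when none of these
holds, the last slack of an integer point is already at most `3`, so subtracting `0` works.
-/

open Pointwise

/-- The halved slacks are `k` times the barycentric coordinates of `q / k` with respect to the
vertices of `Pex`. -/
def PexFacets {R : Type*} [Ring R] [LE R] (k : R) (q : Fin 3 → R) : Prop :=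
  0 ≤ q 2 ∧ q 2 ≤ 2 * q 0 ∧ q 2 ≤ 2 * q 1 ∧ 2 * q 0 + 2 * q 1 - q 2 ≤ 2 * k

theorem PexFacets.add {R : Type*} [CommRing R] [LinearOrder R] [IsStrictOrderedRing R]
    {k l : R} {a b : Fin 3 → R} (ha : PexFacets k a) (hb : PexFacets l b) :
    PexFacets (k + l) (a + b) := by
  obtain ⟨ha₁, ha₂, ha₃, ha₄⟩ := ha
  obtain ⟨hb₁, hb₂, hb₃, hb₄⟩ := hb
  simp only [PexFacets, Pi.add_apply]
  refine ⟨?_, ?_, ?_, ?_⟩ <;> linarith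

theorem pexFacets_intCast_iff {k : ℤ} {x : Fin 3 → ℤ} :
    PexFacets (k : ℝ) (fun i => (x i : ℝ)) ↔ PexFacets k x := by
  simp only [PexFacets]
  norm_cast

theorem convex_setOf_pexFacets (k : ℝ) : Convex ℝ {q | PexFacets k q} := by
  rintro u ⟨hu₁, hu₂, hu₃, hu₄⟩ v ⟨hv₁, hv₂, hv₃, hv₄⟩ a b ha hb hab
  simp only [Set.mem_ofPred_eq, PexFacets, Pi.add_apply, Pi.smul_apply, smul_eq_mul]
  refine ⟨?_, ?_, ?_, ?_⟩ <;> nlinarith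

theorem Pex_eq_setOf_pexFacets : Pex = {q | PexFacets 1 q} := by
  apply subset_antisymm
  · refine convexHull_min ?_ (convex_setOf_pexFacets 1)
    rintro v (rfl | rfl | rfl | rfl) <;> simp [PexFacets]
  · rintro q ⟨h₁, h₂, h₃, h₄⟩
    set w : Fin 4 → ℝ :=
      ![(2 - 2 * q 0 - 2 * q 1 + q 2) / 2, (2 * q 0 - q 2) / 2, (2 * q 1 - q 2) / 2, q 2 / 2]
    set v : Fin 4 → Fin 3 → ℝ := ![![0,0,0], ![1,0,0], ![0,1,0], ![1,1,2]]
    have hq : q = ∑ i, w i • v i := by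
      ext j
      fin_cases j <;>
        simp only [w, v, Fin.isValue, Fin.zero_eta, Fin.mk_one, Fin.reduceFinMk, Finset.sum_apply,
          Pi.smul_apply, smul_eq_mul, Fin.sum_univ_four, Matrix.cons_val] <;> ring
    rw [hq]
    refine (convex_convexHull ℝ _).sum_mem (fun i _ => ?_) ?_ (fun i _ => subset_convexHull ℝ _ ?_)
    · fin_cases i <;>
        simp only [w, Fin.isValue, Fin.zero_eta, Fin.mk_one, Fin.reduceFinMk, Matrix.cons_val] <;>
        linarith
    · simp only [w, Fin.sum_univ_four, Matrix.cons_val]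
      ring
    · fin_cases i <;> simp [v]

theorem mem_smul_Pex_iff_s11 {k : ℝ} (hk : 0 < k) {q : Fin 3 → ℝ} :
    q ∈ k • Pex ↔ PexFacets k q := by
  rw [Set.mem_smul_set_iff_inv_smul_mem₀ hk.ne', Pex_eq_setOf_pexFacets]
  simp only [Set.mem_ofPred_eq, PexFacets, Pi.smul_apply, smul_eq_mul]
  have hk' : k * k⁻¹ = 1 := mul_inv_cancel₀ hk.ne'
  constructor <;> rintro ⟨h₁, h₂, h₃, h₄⟩ <;> refine ⟨?_, ?_, ?_, ?_⟩ <;> nlinarith [inv_pos.2 hk]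

theorem intCast_mem_smul_Pex_iff {k : ℤ} (hk : 0 < k) {x : Fin 3 → ℤ} :
    (fun i => (x i : ℝ)) ∈ (k : ℝ) • Pex ↔ PexFacets k x := by
  rw [mem_smul_Pex_iff_s11 (by exact_mod_cast hk), pexFacets_intCast_iff]

theorem PexFacets.exists_sub_pexFacets_two {x : Fin 3 → ℤ} (hx : PexFacets 3 x) :
    ∃ b, PexFacets 1 b ∧ PexFacets 2 (x - b) := by
  obtain ⟨h₁, h₂, h₃, h₄⟩ := hx
  by_cases hz : 2 ≤ x 2
  · refine ⟨![1,1,2], by simp [PexFacets], ?_⟩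
    simp only [PexFacets, Pi.sub_apply, Matrix.cons_val]
    omega
  by_cases hx₀ : x 2 + 2 ≤ 2 * x 0
  · refine ⟨![1,0,0], by simp [PexFacets], ?_⟩
    simp only [PexFacets, Pi.sub_apply, Matrix.cons_val]
    omega
  by_cases hx₁ : x 2 + 2 ≤ 2 * x 1
  · refine ⟨![0,1,0], by simp [PexFacets], ?_⟩
    simp only [PexFacets, Pi.sub_apply, Matrix.cons_val]
    omega
  · exact ⟨0, by simp [PexFacets], by simp only [PexFacets, sub_zero]; omega⟩

/-- Every lattice point of `3P` is the sum of a lattice point of `2P` and a lattice point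
of `P`: `3P ∩ ℤ³ = (2P ∩ ℤ³) + (P ∩ ℤ³)`. -/
theorem final_example_surjectivity :
    {x : Fin 3 → ℤ | (fun i => (x i : ℝ)) ∈ (3 : ℝ) • Pex} =
      {x : Fin 3 → ℤ | ∃ a b : Fin 3 → ℤ,
        (fun i => (a i : ℝ)) ∈ (2 : ℝ) • Pex ∧ (fun i => (b i : ℝ)) ∈ Pex ∧ x = a + b} := by
  have h₁ := @intCast_mem_smul_Pex_iff 1 one_pos
  have h₂ := @intCast_mem_smul_Pex_iff 2 two_pos
  have h₃ := @intCast_mem_smul_Pex_iff 3 three_pos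
  simp only [Int.cast_one, Int.cast_ofNat, one_smul] at h₁ h₂ h₃
  ext x
  simp only [Set.mem_ofPred_eq, h₁, h₂, h₃]
  constructor
  · intro hx
    obtain ⟨b, hb, hxb⟩ := hx.exists_sub_pexFacets_two
    exact ⟨x - b, b, hxb, hb, (sub_add_cancel x b).symm⟩
  · rintro ⟨a, b, ha, hb, rfl⟩
    simpa using ha.add hb
end
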